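/- Let μ > 0 and λ be real constants with λ + 2μ > 0 (so that λ + 3μ > 0), and set c := (λ+μ)/(λ+3μ). Let U ⊆ ℝ² be open and let u : U → ℝ² be smooth with 𝓛₀u := μΔu + (λ+μ)∇(div u) = 0 on U. Define W_u(x) := c x₁² Δu(x) + 2c x₁ (∂₂u₂(x), −∂₂u₁(x)). Then W_u is componentwise biharmonic on U, i.e. Δ(Δ(W_u)) = 0 on U. -/

import Mathlib

noncomputable section

open Real

/-- The Euclidean plane. -/
abbrev E2 : Type := EuclideanSpace ℝ (Fin 2)

/-- Partial derivative `∂ᵢf` (with `i = 0` corresponding to `∂₁`). -/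
noncomputable def pd (i : Fin 2) (f : E2 → ℝ) (x : E2) : ℝ :=
  fderiv ℝ f x (EuclideanSpace.single i 1)

/-- Laplacian of a scalar function. -/
noncomputable def lap (f : E2 → ℝ) (x : E2) : ℝ :=
  pd 0 (pd 0 f) x + pd 1 (pd 1 f) x

/-- Divergence `div u = ∂₁u₁ + ∂₂u₂`. -/
noncomputable def divg (u : E2 → Fin 2 → ℝ) (x : E2) : ℝ :=
  pd 0 (fun y => u y 0) x + pd 1 (fun y => u y 1) x

/-- The Lamé operator `𝓛₀u = μΔu + (λ+μ)∇(div u)`, `i`-th component. -/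
noncomputable def lame (μ lam : ℝ) (u : E2 → Fin 2 → ℝ) (x : E2) (i : Fin 2) : ℝ :=
  μ * lap (fun y => u y i) x + (lam + μ) * pd i (divg u) x


variable {U : Set E2} {f g : E2 → ℝ} {x : E2} {i j : Fin 2}

theorem pd_congr (h : f =ᶠ[nhds x] g) : pd i f x = pd i g x := by
  unfold pd; rw [h.fderiv_eq]

theorem pd_congrU (hU : IsOpen U) (h : ∀ y ∈ U, f y = g y) (hx : x ∈ U) :
    pd i f x = pd i g x :=
  pd_congr (Filter.eventuallyEq_of_mem (hU.mem_nhds hx) h)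

theorem pd_smooth (hU : IsOpen U) (hf : ContDiffOn ℝ (⊤ : ℕ∞) f U) :
    ContDiffOn ℝ (⊤ : ℕ∞) (pd i f) U := by
  have h1 : ContDiffOn ℝ (⊤ : ℕ∞) (fun y => fderiv ℝ f y) U :=
    hf.fderiv_of_isOpen hU (by simp)
  exact h1.clm_apply contDiffOn_const

theorem pd_diffAt (hU : IsOpen U) (hf : ContDiffOn ℝ (⊤ : ℕ∞) f U) (hx : x ∈ U) :
    DifferentiableAt ℝ f x :=
  (hf.contDiffAt (hU.mem_nhds hx)).differentiableAt (by simp)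

theorem pd_add (hf : DifferentiableAt ℝ f x) (hg : DifferentiableAt ℝ g x) :
    pd i (fun y => f y + g y) x = pd i f x + pd i g x := by
  unfold pd; rw [fderiv_fun_add hf hg]; rfl

theorem pd_const_mul (a : ℝ) (hf : DifferentiableAt ℝ f x) :
    pd i (fun y => a * f y) x = a * pd i f x := by
  unfold pd; rw [fderiv_const_mul hf a]; rfl

theorem pd_mul (hf : DifferentiableAt ℝ f x) (hg : DifferentiableAt ℝ g x) :
    pd i (fun y => f y * g y) x = pd i f x * g x + f x * pd i g x := by
  unfold pd; rw [fderiv_fun_mul hf hg]; simp; ring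

theorem pd_const (a : ℝ) : pd i (fun _ => a) x = 0 := by
  unfold pd; rw [fderiv_fun_const]; rfl

theorem pd_zero : pd i (fun _ => (0:ℝ)) x = 0 := pd_const 0

theorem pd_coord : pd i (fun y : E2 => y j) x = if j = i then 1 else 0 := by
  have : (fun y : E2 => y j) = fun y : E2 => EuclideanSpace.proj (𝕜 := ℝ) j y := rfl
  unfold pd
  rw [this, ContinuousLinearMap.fderiv]
  simp [EuclideanSpace.proj, EuclideanSpace.single_apply]

theorem fderiv_apply_const {v : E2} (hc : DifferentiableAt ℝ (fderiv ℝ f) x) (w : E2) :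
    fderiv ℝ (fun y => fderiv ℝ f y v) x w = fderiv ℝ (fderiv ℝ f) x w v := by
  rw [fderiv_clm_apply hc (differentiableAt_const v)]
  simp

theorem pd_comm (hU : IsOpen U) (hf : ContDiffOn ℝ (⊤ : ℕ∞) f U) (hx : x ∈ U) :
    pd i (pd j f) x = pd j (pd i f) x := by
  have hc : DifferentiableAt ℝ (fderiv ℝ f) x := by
    have h1 : ContDiffOn ℝ (⊤ : ℕ∞) (fun y => fderiv ℝ f y) U :=
      hf.fderiv_of_isOpen hU (by simp)
    exact (h1.contDiffAt (hU.mem_nhds hx)).differentiableAt (by simp)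
  have hsymm : IsSymmSndFDerivAt ℝ f x :=
    (hf.contDiffAt (hU.mem_nhds hx)).isSymmSndFDerivAt (by
      rw [minSmoothness_of_isRCLikeNormedField]; show ((2 : ℕ∞) : WithTop ℕ∞) ≤ ((⊤ : ℕ∞) : WithTop ℕ∞)
      exact WithTop.coe_le_coe.mpr le_top)
  unfold pd
  rw [fderiv_apply_const hc, fderiv_apply_const hc]
  exact hsymm _ _

theorem coord_diffAt : DifferentiableAt ℝ (fun y : E2 => y j) x :=
  (EuclideanSpace.proj (𝕜 := ℝ) j).differentiableAt

theorem coord_smooth : ContDiffOn ℝ (⊤ : ℕ∞) (fun y : E2 => y j) U :=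
  ((EuclideanSpace.proj (𝕜 := ℝ) j).contDiff).contDiffOn

section Calc

theorem lap_congrU (hU : IsOpen U) (h : ∀ y ∈ U, f y = g y) (hx : x ∈ U) :
    lap f x = lap g x := by
  unfold lap
  have h0 : ∀ y ∈ U, pd 0 f y = pd 0 g y := fun y hy => pd_congrU hU h hy
  have h1 : ∀ y ∈ U, pd 1 f y = pd 1 g y := fun y hy => pd_congrU hU h hy
  rw [pd_congrU hU h0 hx, pd_congrU hU h1 hx]

theorem lap_zero_of (hU : IsOpen U) (h : ∀ y ∈ U, f y = 0) (hx : x ∈ U) : lap f x = 0 := by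
  rw [lap_congrU hU h hx]
  unfold lap
  have h0 : (pd 0 (fun _ : E2 => (0:ℝ))) = fun _ => (0:ℝ) := funext fun y => pd_zero
  have h1 : (pd 1 (fun _ : E2 => (0:ℝ))) = fun _ => (0:ℝ) := funext fun y => pd_zero
  rw [h0, h1, pd_zero, pd_zero]
  ring

theorem pd_zero_of (hU : IsOpen U) (h : ∀ y ∈ U, f y = 0) (hx : x ∈ U) : pd i f x = 0 := by
  rw [pd_congrU hU h hx]; exact pd_zero

theorem lap_add (hU : IsOpen U) (hf : ContDiffOn ℝ (⊤ : ℕ∞) f U) (hg : ContDiffOn ℝ (⊤ : ℕ∞) g U) (hx : x ∈ U) :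
    lap (fun y => f y + g y) x = lap f x + lap g x := by
  unfold lap
  have key : ∀ k : Fin 2, ∀ y ∈ U,
      pd k (fun y => f y + g y) y = pd k f y + pd k g y := fun k y hy =>
    pd_add (pd_diffAt hU hf hy) (pd_diffAt hU hg hy)
  rw [pd_congrU hU (key 0) hx, pd_congrU hU (key 1) hx,
      pd_add (pd_diffAt hU (pd_smooth hU hf) hx) (pd_diffAt hU (pd_smooth hU hg) hx),
      pd_add (pd_diffAt hU (pd_smooth hU hf) hx) (pd_diffAt hU (pd_smooth hU hg) hx)]
  ring

theorem lap_const_mul (hU : IsOpen U) (a : ℝ) (hf : ContDiffOn ℝ (⊤ : ℕ∞) f U) (hx : x ∈ U) :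
    lap (fun y => a * f y) x = a * lap f x := by
  unfold lap
  have key : ∀ k : Fin 2, ∀ y ∈ U,
      pd k (fun y => a * f y) y = a * pd k f y := fun k y hy =>
    pd_const_mul a (pd_diffAt hU hf hy)
  rw [pd_congrU hU (key 0) hx, pd_congrU hU (key 1) hx,
      pd_const_mul a (pd_diffAt hU (pd_smooth hU hf) hx),
      pd_const_mul a (pd_diffAt hU (pd_smooth hU hf) hx)]
  ring

theorem pd_lap_comm (hU : IsOpen U) (hf : ContDiffOn ℝ (⊤ : ℕ∞) f U) (hx : x ∈ U) (k : Fin 2) :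
    lap (pd k f) x = pd k (lap f) x := by
  have hpdf : ContDiffOn ℝ (⊤ : ℕ∞) (pd k f) U := pd_smooth hU hf
  have e1 : ∀ (a : Fin 2), ∀ y ∈ U, pd a (pd k f) y = pd k (pd a f) y := fun a y hy =>
    pd_comm hU hf hy
  have step : ∀ a : Fin 2, pd a (pd a (pd k f)) x = pd k (pd a (pd a f)) x := by
    intro a
    have h1 : pd a (pd a (pd k f)) x = pd a (pd k (pd a f)) x :=
      pd_congrU hU (e1 a) hx
    rw [h1]
    exact pd_comm hU (pd_smooth hU hf) hx
  show pd 0 (pd 0 (pd k f)) x + pd 1 (pd 1 (pd k f)) x = pd k (lap f) x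
  rw [step 0, step 1]
  have : ∀ y ∈ U, pd 0 (pd 0 f) y + pd 1 (pd 1 f) y = lap f y := fun y hy => rfl
  rw [← pd_add (pd_diffAt hU (pd_smooth hU (pd_smooth hU hf)) hx)
        (pd_diffAt hU (pd_smooth hU (pd_smooth hU hf)) hx)]
  exact pd_congrU hU this hx

end Calc

theorem x0mul_smooth {h : E2 → ℝ} (hh : ContDiffOn ℝ (⊤ : ℕ∞) h U) :
    ContDiffOn ℝ (⊤ : ℕ∞) (fun y : E2 => y 0 * h y) U :=
  (coord_smooth (j := 0)).mul hh

theorem pd_x0_mul {h : E2 → ℝ} (hh : DifferentiableAt ℝ h x) (i : Fin 2) :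
    pd i (fun y : E2 => y 0 * h y) x
      = (if (0:Fin 2) = i then 1 else 0) * h x + x 0 * pd i h x := by
  rw [pd_mul coord_diffAt hh, pd_coord]

theorem lap_x0_mul (hU : IsOpen U) {h : E2 → ℝ} (hh : ContDiffOn ℝ (⊤ : ℕ∞) h U) (hx : x ∈ U) :
    lap (fun y : E2 => y 0 * h y) x = 2 * pd 0 h x + x 0 * lap h x := by
  have key : ∀ k : Fin 2, ∀ y ∈ U,
      pd k (fun y : E2 => y 0 * h y) y
        = (if (0:Fin 2) = k then 1 else 0) * h y + y 0 * pd k h y := fun k y hy =>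
    pd_x0_mul (pd_diffAt hU hh hy) k
  have hpd : ∀ k : Fin 2, ContDiffOn ℝ (⊤ : ℕ∞) (pd k h) U := fun k => pd_smooth hU hh
  show pd 0 (pd 0 fun y : E2 => y 0 * h y) x + pd 1 (pd 1 fun y : E2 => y 0 * h y) x = _
  rw [pd_congrU hU (key 0) hx, pd_congrU hU (key 1) hx]
  have d1 : ∀ k : Fin 2, DifferentiableAt ℝ (fun y : E2 => (if (0:Fin 2) = k then (1:ℝ) else 0) * h y) x :=
    fun k => (differentiableAt_const _).mul (pd_diffAt hU hh hx)
  have d2 : ∀ k : Fin 2, DifferentiableAt ℝ (fun y : E2 => y 0 * pd k h y) x :=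
    fun k => coord_diffAt.mul (pd_diffAt hU (hpd k) hx)
  rw [pd_add (d1 0) (d2 0), pd_add (d1 1) (d2 1),
      pd_const_mul _ (pd_diffAt hU hh hx), pd_const_mul _ (pd_diffAt hU hh hx),
      pd_mul coord_diffAt (pd_diffAt hU (hpd 0) hx),
      pd_mul coord_diffAt (pd_diffAt hU (hpd 1) hx),
      pd_coord, pd_coord]
  show (if (0:Fin 2) = 0 then (1:ℝ) else 0) * pd 0 h x +
      ((if (0:Fin 2) = 0 then (1:ℝ) else 0) * pd 0 h x + x 0 * pd 0 (pd 0 h) x) +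
      ((if (0:Fin 2) = 1 then (1:ℝ) else 0) * pd 1 h x +
      ((if (0:Fin 2) = 1 then (1:ℝ) else 0) * pd 1 h x + x 0 * pd 1 (pd 1 h) x))
      = 2 * pd 0 h x + x 0 * lap h x
  show (if (0:Fin 2) = 0 then (1:ℝ) else 0) * pd 0 h x +
      ((if (0:Fin 2) = 0 then (1:ℝ) else 0) * pd 0 h x + x 0 * pd 0 (pd 0 h) x) +
      ((if (0:Fin 2) = 1 then (1:ℝ) else 0) * pd 1 h x +
      ((if (0:Fin 2) = 1 then (1:ℝ) else 0) * pd 1 h x + x 0 * pd 1 (pd 1 h) x))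
      = 2 * pd 0 h x + x 0 * (pd 0 (pd 0 h) x + pd 1 (pd 1 h) x)
  norm_num
  ring

theorem lap_x0sq_mul (hU : IsOpen U) {h : E2 → ℝ} (hh : ContDiffOn ℝ (⊤ : ℕ∞) h U) (hx : x ∈ U) :
    lap (fun y : E2 => (y 0)^2 * h y) x
      = 2 * h x + 4 * x 0 * pd 0 h x + (x 0)^2 * lap h x := by
  have e : ∀ y ∈ U, (y 0)^2 * h y = y 0 * (y 0 * h y) := fun y _ => by ring
  rw [lap_congrU hU e hx, lap_x0_mul hU (x0mul_smooth hh) hx,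
      lap_x0_mul hU hh hx, pd_x0_mul (pd_diffAt hU hh hx) 0]
  norm_num
  ring


theorem lap_smooth (hU : IsOpen U) (hf : ContDiffOn ℝ (⊤ : ℕ∞) f U) :
    ContDiffOn ℝ (⊤ : ℕ∞) (lap f) U := by
  unfold lap
  exact (pd_smooth hU (pd_smooth hU hf)).add (pd_smooth hU (pd_smooth hU hf))

theorem x0sqmul_smooth {h : E2 → ℝ} (hh : ContDiffOn ℝ (⊤ : ℕ∞) h U) :
    ContDiffOn ℝ (⊤ : ℕ∞) (fun y : E2 => (y 0)^2 * h y) U :=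
  (x0mul_smooth (x0mul_smooth hh)).congr fun y _ => by ring

theorem pd_lincomb_zero (hU : IsOpen U) {p q : E2 → ℝ}
    (hp : ContDiffOn ℝ (⊤ : ℕ∞) p U) (hq : ContDiffOn ℝ (⊤ : ℕ∞) q U) (a b : ℝ)
    (h : ∀ y ∈ U, a * p y + b * q y = 0) (k : Fin 2) :
    ∀ y ∈ U, a * pd k p y + b * pd k q y = 0 := by
  intro y hy
  have e : pd k (fun z => a * p z + b * q z) y = a * pd k p y + b * pd k q y := by
    rw [pd_add ((differentiableAt_const a).fun_mul (pd_diffAt hU hp hy))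
          ((differentiableAt_const b).fun_mul (pd_diffAt hU hq hy)),
        pd_const_mul a (pd_diffAt hU hp hy), pd_const_mul b (pd_diffAt hU hq hy)]
  rw [← e]
  exact pd_zero_of hU h hy

theorem lap_lincomb4 (hU : IsOpen U) {p1 p2 p3 p4 : E2 → ℝ}
    (h1 : ContDiffOn ℝ (⊤ : ℕ∞) p1 U) (h2 : ContDiffOn ℝ (⊤ : ℕ∞) p2 U)
    (h3 : ContDiffOn ℝ (⊤ : ℕ∞) p3 U) (h4 : ContDiffOn ℝ (⊤ : ℕ∞) p4 U)
    (a1 a2 a3 a4 : ℝ) (hx : x ∈ U) :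
    lap (fun y => a1 * p1 y + a2 * p2 y + a3 * p3 y + a4 * p4 y) x
      = a1 * lap p1 x + a2 * lap p2 x + a3 * lap p3 x + a4 * lap p4 x := by
  have s1 : ContDiffOn ℝ (⊤ : ℕ∞) (fun y => a1 * p1 y) U := contDiffOn_const.mul h1
  have s2 : ContDiffOn ℝ (⊤ : ℕ∞) (fun y => a2 * p2 y) U := contDiffOn_const.mul h2
  have s3 : ContDiffOn ℝ (⊤ : ℕ∞) (fun y => a3 * p3 y) U := contDiffOn_const.mul h3
  have s4 : ContDiffOn ℝ (⊤ : ℕ∞) (fun y => a4 * p4 y) U := contDiffOn_const.mul h4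
  rw [lap_add hU ((s1.add s2).add s3) s4 hx, lap_add hU (s1.add s2) s3 hx,
      lap_add hU s1 s2 hx, lap_const_mul hU a1 h1 hx, lap_const_mul hU a2 h2 hx,
      lap_const_mul hU a3 h3 hx, lap_const_mul hU a4 h4 hx]

theorem lap_lincomb2 (hU : IsOpen U) {p q : E2 → ℝ}
    (hp : ContDiffOn ℝ (⊤ : ℕ∞) p U) (hq : ContDiffOn ℝ (⊤ : ℕ∞) q U) (a b : ℝ) (hx : x ∈ U) :
    lap (fun y => a * p y + b * q y) x = a * lap p x + b * lap q x := by
  rw [lap_add hU (contDiffOn_const.mul hp) (contDiffOn_const.mul hq) hx,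
      lap_const_mul hU a hp hx, lap_const_mul hU b hq hx]

theorem biharm_aux (hU : IsOpen U) (c : ℝ) {A B2 W0 : E2 → ℝ}
    (hA : ContDiffOn ℝ (⊤ : ℕ∞) A U) (hB2 : ContDiffOn ℝ (⊤ : ℕ∞) B2 U)
    (hlapA : ∀ y ∈ U, lap A y = 0)
    (hbiB : ∀ y ∈ U, lap (lap B2) y = 0)
    (hW : ∀ y : E2, W0 y = c * (y 0) ^ 2 * A y + 2 * c * y 0 * B2 y)
    (hkey : ∀ y ∈ U, pd 0 (pd 0 A) y + pd 0 (lap B2) y = 0)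
    (hx : x ∈ U) : lap (lap W0) x = 0 := by
  have hM : ContDiffOn ℝ (⊤ : ℕ∞) (lap B2) U := lap_smooth hU hB2
  have hpdA : ContDiffOn ℝ (⊤ : ℕ∞) (pd 0 A) U := pd_smooth hU hA
  have hpdB : ContDiffOn ℝ (⊤ : ℕ∞) (pd 0 B2) U := pd_smooth hU hB2
  have S1 : ∀ y ∈ U, lap W0 y =
      2*c*A y + 4*c*(y 0 * pd 0 A y) + 4*c*pd 0 B2 y + 2*c*(y 0 * lap B2 y) := by
    intro y hy
    have e0 : ∀ z ∈ U, W0 z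
        = c * ((z 0)^2 * A z) + (2*c) * (z 0 * B2 z) + 0 * A z + 0 * A z :=
      fun z _ => by rw [hW z]; ring
    rw [lap_congrU hU e0 hy,
        lap_lincomb4 hU (x0sqmul_smooth hA) (x0mul_smooth hB2) hA hA c (2*c) 0 0 hy,
        lap_x0sq_mul hU hA hy, lap_x0_mul hU hB2 hy, hlapA y hy]
    ring
  have S2 : lap (lap W0) x
      = lap (fun y => 2*c*A y + 4*c*(y 0 * pd 0 A y) + 4*c*pd 0 B2 y
          + 2*c*(y 0 * lap B2 y)) x :=
    lap_congrU hU S1 hx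
  rw [S2, lap_lincomb4 hU hA (x0mul_smooth hpdA) hpdB (x0mul_smooth hM)
        (2*c) (4*c) (4*c) (2*c) hx,
      hlapA x hx, lap_x0_mul hU hpdA hx, lap_x0_mul hU hM hx,
      pd_lap_comm hU hB2 hx 0, pd_lap_comm hU hA hx 0,
      pd_zero_of (i := 0) hU hlapA hx, hbiB x hx]
  linear_combination (8*c) * (hkey x hx)

/-- For a smooth solution of the Lamé equation `𝓛₀u = 0` on an open set `U ⊆ ℝ²`,
the vector field `W_u(x) = c x₁² Δu(x) + 2c x₁ (∂₂u₂(x), −∂₂u₁(x))`, with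
`c = (λ+μ)/(λ+3μ)`, is componentwise biharmonic on `U`. -/
theorem W_biharmonic
    (μ lam c : ℝ) (hμ : 0 < μ) (hlam : 0 < lam + 2 * μ)
    (hc : c = (lam + μ) / (lam + 3 * μ))
    (U : Set E2) (hU : IsOpen U)
    (u : E2 → Fin 2 → ℝ) (hu : ContDiffOn ℝ (⊤ : ℕ∞) u U)
    (hlame : ∀ x ∈ U, ∀ i : Fin 2, lame μ lam u x i = 0)
    (W : E2 → Fin 2 → ℝ)
    (hW0 : ∀ x : E2,
      W x 0 = c * (x 0) ^ 2 * lap (fun y => u y 0) x + 2 * c * x 0 * pd 1 (fun y => u y 1) x)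
    (hW1 : ∀ x : E2,
      W x 1 = c * (x 0) ^ 2 * lap (fun y => u y 1) x - 2 * c * x 0 * pd 1 (fun y => u y 0) x) :
    ∀ x ∈ U, ∀ i : Fin 2, lap (lap (fun y => W y i)) x = 0 := by
  have hu0 : ContDiffOn ℝ (⊤ : ℕ∞) (fun y => u y 0) U := contDiffOn_pi.1 hu 0
  have hu1 : ContDiffOn ℝ (⊤ : ℕ∞) (fun y => u y 1) U := contDiffOn_pi.1 hu 1
  have hd : ContDiffOn ℝ (⊤ : ℕ∞) (divg u) U := by
    unfold divg
    exact (pd_smooth hU hu0).add (pd_smooth hU hu1)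
  have hAsm : ContDiffOn ℝ (⊤ : ℕ∞) (lap (fun y => u y 0)) U := lap_smooth hU hu0
  have hLsm : ContDiffOn ℝ (⊤ : ℕ∞) (lap (fun y => u y 1)) U := lap_smooth hU hu1
  have hl0 : ∀ y ∈ U,
      μ * lap (fun z => u z 0) y + (lam + μ) * pd 0 (divg u) y = 0 :=
    fun y hy => hlame y hy 0
  have hl1 : ∀ y ∈ U,
      μ * lap (fun z => u z 1) y + (lam + μ) * pd 1 (divg u) y = 0 :=
    fun y hy => hlame y hy 1
  -- Δ(div u) = Σ ∂ᵢ Δuᵢ on U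
  have e1 : ∀ y ∈ U, lap (divg u) y
      = pd 0 (lap (fun z => u z 0)) y + pd 1 (lap (fun z => u z 1)) y := by
    intro y hy
    have h1 : lap (divg u) y
        = lap (pd 0 (fun z => u z 0)) y + lap (pd 1 (fun z => u z 1)) y :=
      lap_add hU (pd_smooth hU hu0) (pd_smooth hU hu1) hy
    rw [h1, pd_lap_comm hU hu0 hy 0, pd_lap_comm hU hu1 hy 1]
  -- Δ(div u) = 0 on U
  have hlapd : ∀ y ∈ U, lap (divg u) y = 0 := by
    intro y hy
    have k0 := pd_lincomb_zero hU hAsm (pd_smooth hU hd) μ (lam+μ) hl0 0 y hy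
    have k1 := pd_lincomb_zero hU hLsm (pd_smooth hU hd) μ (lam+μ) hl1 1 y hy
    have e2 : lap (divg u) y
        = pd 0 (pd 0 (divg u)) y + pd 1 (pd 1 (divg u)) y := rfl
    have e3 := e1 y hy
    have h4 : (lam + 2*μ) * lap (divg u) y = 0 := by
      linear_combination k0 + k1 + μ * e3 + (lam+μ) * e2
    rcases mul_eq_zero.1 h4 with h | h
    · linarith
    · exact h
  -- Δ(Δu₀) = 0 on U
  have hlapA : ∀ y ∈ U, lap (lap (fun z => u z 0)) y = 0 := by
    intro y hy
    have l1 : lap (fun z => μ * lap (fun w => u w 0) z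
        + (lam+μ) * pd 0 (divg u) z) y = 0 := lap_zero_of hU hl0 hy
    have l2 := lap_lincomb2 (q := pd 0 (divg u)) hU hAsm (pd_smooth hU hd) μ (lam+μ) hy
    rw [l2, pd_lap_comm hU hd hy 0, pd_zero_of (i := 0) hU hlapd hy] at l1
    have : μ * lap (lap (fun z => u z 0)) y = 0 := by linarith
    rcases mul_eq_zero.1 this with h | h
    · linarith
    · exact h
  -- Δ(Δu₁) = 0 on U
  have hlapL : ∀ y ∈ U, lap (lap (fun z => u z 1)) y = 0 := by
    intro y hy
    have l1 : lap (fun z => μ * lap (fun w => u w 1) z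
        + (lam+μ) * pd 1 (divg u) z) y = 0 := lap_zero_of hU hl1 hy
    have l2 := lap_lincomb2 (q := pd 1 (divg u)) hU hLsm (pd_smooth hU hd) μ (lam+μ) hy
    rw [l2, pd_lap_comm hU hd hy 1, pd_zero_of (i := 1) hU hlapd hy] at l1
    have : μ * lap (lap (fun z => u z 1)) y = 0 := by linarith
    rcases mul_eq_zero.1 this with h | h
    · linarith
    · exact h
  -- ∂₀∂₀Δu₀ + ∂₀∂₁Δu₁ = 0 on U
  have hH : ∀ y ∈ U, 1 * pd 0 (lap (fun z => u z 0)) y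
      + 1 * pd 1 (lap (fun z => u z 1)) y = 0 := by
    intro y hy
    have := e1 y hy
    have h0 := hlapd y hy
    linarith
  have hstar0 : ∀ y ∈ U, pd 0 (pd 0 (lap (fun z => u z 0))) y
      + pd 0 (pd 1 (lap (fun z => u z 1))) y = 0 := by
    intro y hy
    have := pd_lincomb_zero hU (pd_smooth hU hAsm) (pd_smooth hU hLsm) 1 1 hH 0 y hy
    linarith
  -- ∂₀∂₀Δu₁ − ∂₀∂₁Δu₀ = 0 on U
  have hstar1 : ∀ y ∈ U, pd 0 (pd 0 (lap (fun z => u z 1))) y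
      - pd 0 (pd 1 (lap (fun z => u z 0))) y = 0 := by
    intro y hy
    have q0 := pd_lincomb_zero (q := pd 1 (divg u)) hU hLsm (pd_smooth hU hd)
      μ (lam+μ) hl1 0
    have q00 := pd_lincomb_zero (q := pd 0 (pd 1 (divg u))) hU (pd_smooth hU hLsm)
      (pd_smooth hU (pd_smooth hU hd)) μ (lam+μ) q0 0 y hy
    have r0 := pd_lincomb_zero (q := pd 0 (divg u)) hU hAsm (pd_smooth hU hd)
      μ (lam+μ) hl0 1
    have r01 := pd_lincomb_zero (q := pd 1 (pd 0 (divg u))) hU (pd_smooth hU hAsm)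
      (pd_smooth hU (pd_smooth hU hd)) μ (lam+μ) r0 0 y hy
    have hsw : ∀ z ∈ U, pd 0 (pd 1 (divg u)) z = pd 1 (pd 0 (divg u)) z :=
      fun z hz => pd_comm hU hd hz
    have hsw0 : pd 0 (pd 0 (pd 1 (divg u))) y = pd 0 (pd 1 (pd 0 (divg u))) y :=
      pd_congrU hU hsw hy
    have hμkey : μ * (pd 0 (pd 0 (lap (fun z => u z 1))) y
        - pd 0 (pd 1 (lap (fun z => u z 0))) y) = 0 := by
      linear_combination q00 - r01 - (lam+μ) * hsw0
    rcases mul_eq_zero.1 hμkey with h | h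
    · linarith
    · exact h
  -- pointwise commutations needed for the two components
  have hBL : ∀ z ∈ U, lap (pd 1 (fun w => u w 1)) z
      = pd 1 (lap (fun w => u w 1)) z := fun z hz => pd_lap_comm hU hu1 hz 1
  have hCL : ∀ z ∈ U, lap (fun w => -(pd 1 (fun v => u v 0) w)) z
      = (-1) * pd 1 (lap (fun v => u v 0)) z := by
    intro z hz
    have e : ∀ w ∈ U, -(pd 1 (fun v => u v 0) w)
        = (-1) * pd 1 (fun v => u v 0) w := fun w _ => by ring
    rw [lap_congrU hU e hz,
        lap_const_mul hU (-1) (pd_smooth hU hu0) hz,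
        pd_lap_comm hU hu0 hz 1]
  intro x hx i
  fin_cases i
  · -- component 0
    show lap (lap (fun y => W y 0)) x = 0
    refine biharm_aux hU c hAsm (pd_smooth hU hu1) hlapA ?_ hW0 ?_ hx
    · intro y hy
      rw [lap_congrU hU hBL hy, pd_lap_comm hU hLsm hy 1,
          pd_zero_of (i := 1) hU hlapL hy]
    · intro y hy
      rw [pd_congrU hU hBL hy]
      exact hstar0 y hy
  · -- component 1
    show lap (lap (fun y => W y 1)) x = 0
    refine biharm_aux hU c hLsm ((pd_smooth hU hu0).neg) hlapL ?_
      (fun y => by rw [hW1 y]; ring) ?_ hx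
    · intro y hy
      rw [lap_congrU hU hCL hy,
          lap_const_mul hU (-1) (pd_smooth hU hAsm) hy,
          pd_lap_comm hU hAsm hy 1,
          pd_zero_of (i := 1) hU hlapA hy]
      ring
    · intro y hy
      rw [pd_congrU hU hCL hy,
          pd_const_mul (-1) (pd_diffAt hU (pd_smooth hU hAsm) hy)]
      have := hstar1 y hy
      linarith
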